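/- arXiv:1704.03479 — 11 statements merged into one kernel-verified Lean document; each statement's English description precedes it below -/
import Mathlib

section
/- f(2,q) = 2q + 1: every word of length 2q+1 over an alphabet of size q contains a copy of Z_2 = aba (i.e., a subword of the form v ++ u ++ v with u, v nonempty), and there exists a word of length 2q over an alphabet of size q containing no such subword. -/
/-!
Among `2q + 1` letters over `q` symbols some letter `a` occurs three times, and `a … a … a`
is a copy `v u v` with `v = a`. Conversely, in a copy `v u v` the first letter of `v` recurs at
distance `|v| + |u| ≥ 2`, which never happens in the word `0 0 1 1 … (q-1) (q-1)`.
-/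

/-- A word contains a copy of `Z₂ = aba` if it has an infix `v ++ u ++ v`
with `u, v` nonempty. -/
def ContainsZ2 {α : Type*} (w : List α) : Prop :=
  ∃ u v : List α, u ≠ [] ∧ v ≠ [] ∧ (v ++ u ++ v) <:+: w

theorem List.exists_lt_count_of_card_mul_lt_length {α : Type*} [Fintype α] [DecidableEq α]
    {n : ℕ} (w : List α) (h : Fintype.card α * n < w.length) : ∃ a, n < w.count a := by
  have hsum : ∑ a : α, w.count a = w.length := by
    simpa [Multiset.coe_count] using
      Multiset.sum_count_eq_card (s := Finset.univ) (m := (w : Multiset α)) (by simp)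
  obtain ⟨a, -, ha⟩ := Finset.exists_lt_of_sum_lt (s := Finset.univ) (f := fun _ => n)
    (g := fun a => w.count a) (by simpa [hsum] using h)
  exact ⟨a, ha⟩

theorem containsZ2_of_sublist {α : Type*} {a : α} {w : List α} (h : [a, a, a].Sublist w) :
    ContainsZ2 w := by
  obtain ⟨r₁, r₂, rfl, h₁, h₂⟩ := List.cons_sublist_iff.1 h
  obtain ⟨r₃, r₄, rfl, h₃, h₄⟩ := List.cons_sublist_iff.1 h₂
  obtain ⟨x, y, rfl⟩ := List.append_of_mem h₁
  obtain ⟨x', y', rfl⟩ := List.append_of_mem (List.singleton_sublist.1 h₄)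
  exact ⟨y ++ r₃ ++ x', [a], by simp [List.ne_nil_of_mem h₃], by simp, x, y', by simp⟩

theorem ContainsZ2.exists_getElem_eq {α : Type*} {w : List α} (h : ContainsZ2 w) :
    ∃ i j, ∃ (hij : i + 2 ≤ j) (hj : j < w.length), w[i] = w[j] := by
  obtain ⟨u, v, hu, hv, s, t, rfl⟩ := h
  obtain ⟨a, v', rfl⟩ := List.exists_cons_of_ne_nil hv
  have hu' := List.length_pos_of_ne_nil hu
  refine ⟨s.length, (s ++ a :: (v' ++ u)).length, by simp only [List.length_append, List.length_cons]; omega,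
    by simp, ?_⟩
  exact (List.getElem_of_append (a := a) (l₂ := v' ++ u ++ a :: v' ++ t) (by simp) rfl).trans
    (List.getElem_of_append (a := a) (l₂ := v' ++ t) (by simp) rfl).symm

def pairedWord (q : ℕ) : List (Fin q) :=
  List.ofFn fun k : Fin (2 * q) => ⟨k / 2, by omega⟩

theorem length_pairedWord (q : ℕ) : (pairedWord q).length = 2 * q := List.length_ofFn

theorem not_containsZ2_pairedWord (q : ℕ) : ¬ ContainsZ2 (pairedWord q) := by
  intro h
  obtain ⟨i, j, hij, hj, heq⟩ := h.exists_getElem_eq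
  have : i / 2 = j / 2 := by simpa [pairedWord, Fin.ext_iff] using heq
  omega

theorem f_two_eq_general (q : ℕ) :
    (∀ w : List (Fin q), w.length = 2 * q + 1 → ContainsZ2 w) ∧
    (∃ w : List (Fin q), w.length = 2 * q ∧ ¬ ContainsZ2 w) := by
  refine ⟨fun w hw => ?_, pairedWord q, length_pairedWord q, not_containsZ2_pairedWord q⟩
  obtain ⟨a, ha⟩ := w.exists_lt_count_of_card_mul_lt_length (n := 2) (by simp [hw]; omega)
  exact containsZ2_of_sublist (List.replicate_sublist_iff.2 ha)

/-- `f(2,q) = 2q + 1`: every word of length `2q+1` over `Fin q` contains a copy of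
`Z₂`, and some word of length `2q` over `Fin q` contains no copy of `Z₂`. -/
theorem f_two_eq (q : ℕ) (hq : 1 ≤ q) :
    (∀ w : List (Fin q), w.length = 2 * q + 1 → ContainsZ2 w) ∧
    (∃ w : List (Fin q), w.length = 2 * q ∧ ¬ ContainsZ2 w) :=
  f_two_eq_general q
end

section
/- For all n ≥ 1 and q ≥ 1, f(n+1, q) ≤ (f(n,q) + 1)(q^{f(n,q)} + 1) - 1. -/
/-- Zimin words over the alphabet `ℕ`. -/
def Zimin : ℕ → List ℕ
  | 0 => []
  | n + 1 => Zimin n ++ [n + 1] ++ Zimin n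

/-- `X` is a copy of `Z_n`: it is obtained by substituting a nonempty word for
each letter of the Zimin word `Z_n`. -/
def IsZiminCopy {α : Type*} (n : ℕ) (X : List α) : Prop :=
  ∃ σ : ℕ → List α, (∀ i, σ i ≠ []) ∧ X = (Zimin n).flatMap σ

/-- `w` contains a copy of `Z_n` as a contiguous subword (infix). -/
def ContainsZimin {α : Type*} (n : ℕ) (w : List α) : Prop :=
  ∃ X : List α, IsZiminCopy n X ∧ X <:+: w

/-- `f(n,q)`: the least `N` such that every word of length `N` over `Fin q`
contains a copy of `Z_n`. -/
noncomputable def zf (n q : ℕ) : ℕ :=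
  sInf {N | ∀ w : List (Fin q), w.length = N → ContainsZimin n w}

lemma zimin_mem_le {n i : ℕ} (h : i ∈ Zimin n) : i ≤ n := by
  induction n with
  | zero => simp [Zimin] at h
  | succ n ih =>
    simp only [Zimin, List.mem_append, List.mem_singleton] at h
    rcases h with (h | h) | h
    · exact (ih h).trans (Nat.le_succ n)
    · omega
    · exact (ih h).trans (Nat.le_succ n)

lemma containsZimin_mono {α : Type*} {n : ℕ} {w : List α}
    (h : ContainsZimin (n + 1) w) : ContainsZimin n w := by
  obtain ⟨X, ⟨σ, hσ, hX⟩, hinf⟩ := h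
  refine ⟨(Zimin n).flatMap σ, ⟨σ, hσ, rfl⟩, ?_⟩
  refine List.IsInfix.trans ?_ hinf
  rw [hX]
  have : Zimin (n + 1) = Zimin n ++ [n + 1] ++ Zimin n := rfl
  rw [this, List.flatMap_append, List.flatMap_append]
  exact ((List.prefix_append _ _).trans (List.prefix_append _ _)).isInfix

lemma step (n q L : ℕ)
    (hL : ∀ w : List (Fin q), w.length = L → ContainsZimin n w) :
    ∀ w : List (Fin q), w.length = (L + 1) * (q ^ L + 1) - 1 →
      ContainsZimin (n + 1) w := by
  intro w hw
  -- blocks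
  have hbnd : ∀ (i : Fin (q ^ L + 1)) (k : Fin L), (i : ℕ) * (L + 1) + k < w.length := by
    intro i k
    have hi : (i : ℕ) ≤ q ^ L := Nat.lt_succ_iff.mp i.isLt
    have hk : (k : ℕ) < L := k.isLt
    have : (i : ℕ) * (L + 1) ≤ q ^ L * (L + 1) := Nat.mul_le_mul_right _ hi
    have hq1 : 1 ≤ q ^ L + 1 := by omega
    rw [hw]
    have : (L + 1) * (q ^ L + 1) = q ^ L * (L + 1) + (L + 1) := by ring
    omega
  set g : Fin (q ^ L + 1) → (Fin L → Fin q) :=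
    fun i k => w[(i : ℕ) * (L + 1) + k]'(hbnd i k) with hg
  have hcard : Fintype.card (Fin L → Fin q) < Fintype.card (Fin (q ^ L + 1)) := by
    simp [Fintype.card_fun]
  obtain ⟨i, j, hij, hgij⟩ := Fintype.exists_ne_map_eq_of_card_lt g hcard
  -- wlog i < j
  wlog hlt : (i : ℕ) < (j : ℕ) generalizing i j
  · exact this j i hij.symm hgij.symm (by omega)
  set a := (i : ℕ) * (L + 1) with ha
  set b := (j : ℕ) * (L + 1) with hb
  have hab : a + L + 1 ≤ b := by
    have : ((i : ℕ) + 1) * (L + 1) ≤ (j : ℕ) * (L + 1) := Nat.mul_le_mul_right _ hlt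
    rw [ha, hb]; nlinarith
  have hblen : b + L ≤ w.length := by
    have hj : (j : ℕ) ≤ q ^ L := Nat.lt_succ_iff.mp j.isLt
    have : (j : ℕ) * (L + 1) ≤ q ^ L * (L + 1) := Nat.mul_le_mul_right _ hj
    rw [hw]
    have h2 : (L + 1) * (q ^ L + 1) = q ^ L * (L + 1) + (L + 1) := by ring
    omega
  set B := (w.drop a).take L with hB
  set B' := (w.drop b).take L with hB'
  have hBlen : B.length = L := by
    rw [hB, List.length_take, List.length_drop]; omega
  have hB'len : B'.length = L := by
    rw [hB', List.length_take, List.length_drop]; omega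
  have hBB' : B = B' := by
    apply List.ext_getElem (by rw [hBlen, hB'len])
    intro k hk1 hk2
    rw [hBlen] at hk1
    have h1 : B[k]'(by omega) = w[a + k]'(by omega) := by
      simp [hB, List.getElem_take, List.getElem_drop]
    have h2 : B'[k]'(by omega) = w[b + k]'(by omega) := by
      simp [hB', List.getElem_take, List.getElem_drop]
    have := congrFun hgij ⟨k, hk1⟩
    simp only [hg] at this
    rw [h1, h2]
    simpa [ha, hb] using this
  set m := (w.drop (a + L)).take (b - (a + L)) with hm
  have hmne : m ≠ [] := by
    rw [hm, ← List.length_pos_iff, List.length_take, List.length_drop]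
    omega
  -- decomposition of w
  have hdec : w = w.take a ++ (B ++ (m ++ (B' ++ w.drop (b + L)))) := by
    conv_lhs => rw [← List.take_append_drop a w]
    congr 1
    conv_lhs => rw [← List.take_append_drop L (w.drop a)]
    rw [← hB, List.drop_drop]
    congr 1
    conv_lhs => rw [← List.take_append_drop (b - (a + L)) (w.drop (a + L))]
    rw [← hm, List.drop_drop]
    congr 1
    have : a + L + (b - (a + L)) = b := by omega
    rw [this]
    conv_lhs => rw [← List.take_append_drop L (w.drop b)]
    rw [← hB', List.drop_drop]
  -- copy of Z_n inside B
  obtain ⟨X, ⟨σ, hσ, hX⟩, p, s, hpXs⟩ := hL B hBlen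
  set σ' : ℕ → List (Fin q) := fun k => if k = n + 1 then s ++ m ++ p else σ k with hσ'
  refine ⟨X ++ (s ++ m ++ p) ++ X, ⟨σ', ?_, ?_⟩, w.take a ++ p, s ++ w.drop (b + L), ?_⟩
  · intro k
    rw [hσ']
    by_cases hk : k = n + 1 <;> simp [hk, hσ k, hmne]
  · have hfz : (Zimin n).flatMap σ' = (Zimin n).flatMap σ := by
      apply List.flatMap_congr
      intro x hx
      have := zimin_mem_le hx
      rw [hσ']
      simp [show x ≠ n + 1 by omega]
    have : Zimin (n + 1) = Zimin n ++ [n + 1] ++ Zimin n := rfl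
    rw [this, List.flatMap_append, List.flatMap_append, hfz, hX]
    simp [hσ']
  · conv_rhs => rw [hdec]
    rw [← hBB', ← hpXs]
    simp [List.append_assoc]

/-- `f(n+1, q) ≤ (f(n,q) + 1)(q^{f(n,q)} + 1) - 1`. -/
theorem zf_rec (n q : ℕ) (hn : 1 ≤ n) (hq : 1 ≤ q) :
    zf (n + 1) q ≤ (zf n q + 1) * (q ^ zf n q + 1) - 1 := by
  by_cases hne : {N | ∀ w : List (Fin q), w.length = N → ContainsZimin n w}.Nonempty
  · have hL := Nat.sInf_mem hne
    exact Nat.sInf_le (step n q (zf n q) hL)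
  · have hsub : {N | ∀ w : List (Fin q), w.length = N → ContainsZimin (n + 1) w} ⊆
        {N | ∀ w : List (Fin q), w.length = N → ContainsZimin n w} := by
      intro N hN w hwl
      exact containsZimin_mono (hN w hwl)
    have : {N | ∀ w : List (Fin q), w.length = N → ContainsZimin (n + 1) w} = ∅ := by
      rw [← Set.not_nonempty_iff_eq_empty]
      exact fun h => hne (h.mono hsub)
    unfold zf
    rw [this, Nat.sInf_empty]
    exact Nat.zero_le _
end

section
/- Every word of length f over a q-letter alphabet, where f = (L+1)(q^L + 1) - 1 and every word of length L over Fin q contains a copy of Z_n, contains two identical subwords of length at most L that are copies of Z_n and are separated by at least one letter; consequently it contains a copy of Z_{n+1}. -/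
/-!
Cut `w` into `q ^ L + 1` blocks of length `L`, consecutive blocks being separated by one
letter. Only `q ^ L` words of length `L` exist, so two of the blocks coincide; as the same
copy `X` of `Z_n` sits at the same place in both, `w` contains `X ++ Y ++ X` with `Y`
nonempty (it contains a separating letter), which is a copy of `Z_{n+1}`.
-/

theorem le_of_mem_zimin {n i : ℕ} (hi : i ∈ Zimin n) : i ≤ n := by
  induction n with
  | zero => simp [Zimin] at hi
  | succ n ih =>
    simp only [Zimin, List.mem_append, List.mem_singleton] at hi
    grind

theorem IsZiminCopy.append_append {α : Type*} {n : ℕ} {X Y : List α} (hX : IsZiminCopy n X)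
    (hY : Y ≠ []) : IsZiminCopy (n + 1) (X ++ Y ++ X) := by
  obtain ⟨σ, hσ, rfl⟩ := hX
  set τ : ℕ → List α := Function.update σ (n + 1) Y
  have hτ : (Zimin n).flatMap τ = (Zimin n).flatMap σ :=
    List.flatMap_congr fun i hi =>
      Function.update_of_ne (by have := le_of_mem_zimin hi; omega) _ _
  refine ⟨τ, fun i => ?_, ?_⟩
  · by_cases h : i = n + 1
    · simpa [τ, h] using hY
    · simpa [τ, h] using hσ i
  · simp [Zimin, List.flatMap_append, hτ, τ]

namespace List

variable {α : Type*}

theorem exists_append_append_infix_of_infix {X B m : List α} (hXB : X <:+: B) (hm : m ≠ []) :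
    ∃ Y, Y ≠ [] ∧ X ++ Y ++ X <:+: B ++ m ++ B := by
  obtain ⟨u, v, rfl⟩ := hXB
  exact ⟨v ++ m ++ u, by simp [hm], u, v, by simp⟩

theorem exists_take_drop_append_append_infix (w : List α) {a b L : ℕ} (hab : a + L < b)
    (hbw : b + L ≤ w.length) :
    ∃ m, m ≠ [] ∧ (w.drop a).take L ++ m ++ (w.drop b).take L <:+: w := by
  refine ⟨(w.drop (a + L)).take (b - (a + L)), ?_, ?_⟩
  · rw [← length_pos_iff, length_take, length_drop]
    omega
  · have hsplit : (w.drop a).take L ++ (w.drop (a + L)).take (b - (a + L)) ++ (w.drop b).take L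
        = (w.drop a).take (L + (b - (a + L)) + L) := by
      rw [take_add, take_add, drop_drop, drop_drop,
        show a + (L + (b - (a + L))) = b by omega]
    rw [hsplit]
    exact (take_prefix _ _).isInfix.trans (drop_suffix a w).isInfix

theorem exists_append_append_self_infix [Fintype α] (w : List α) {L : ℕ}
    (hw : (L + 1) * Fintype.card α ^ L + L ≤ w.length) :
    ∃ B m, B.length = L ∧ m ≠ [] ∧ B ++ m ++ B <:+: w := by
  set N := Fintype.card α ^ L
  have hstart : ∀ i ≤ N, i * (L + 1) + L ≤ w.length := fun i hi => by
    nlinarith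
  let block : Fin (N + 1) → List.Vector α L := fun i =>
    ⟨(w.drop (i * (L + 1))).take L, by
      rw [length_take, length_drop]; have := hstart i i.is_le; omega⟩
  obtain ⟨i, j, hij, hblock⟩ :=
    Fintype.exists_ne_map_eq_of_card_lt block (by simp [N, card_vector])
  replace hblock : (w.drop (i * (L + 1))).take L = (w.drop (j * (L + 1))).take L :=
    congrArg Subtype.val hblock
  wlog hlt : i < j generalizing i j
  · exact this j i hij.symm hblock.symm (by omega)
  obtain ⟨m, hm, hinfix⟩ := exists_take_drop_append_append_infix w
    (a := i * (L + 1)) (b := j * (L + 1)) (L := L) (by nlinarith [Fin.lt_def.1 hlt])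
    (hstart j j.is_le)
  rw [← hblock] at hinfix
  exact ⟨_, m, (block i).2, hm, hinfix⟩

end List

/-- If every word of length `L` over `Fin q` contains a copy of `Z_n`, then every
word of length `(L+1)(q^L+1) - 1` contains two identical subwords of length at
most `L` which are copies of `Z_n`, separated by at least one letter; in
particular it contains a copy of `Z_{n+1}`. -/
theorem two_copies_and_step (n q L : ℕ)
    (hL : ∀ w : List (Fin q), w.length = L → ContainsZimin n w)
    (w : List (Fin q)) (hw : w.length = (L + 1) * (q ^ L + 1) - 1) :
    (∃ X Y : List (Fin q), IsZiminCopy n X ∧ X.length ≤ L ∧ Y ≠ [] ∧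
      (X ++ Y ++ X) <:+: w) ∧
    ContainsZimin (n + 1) w := by
  obtain ⟨B, m, hB, hm, hBmB⟩ := w.exists_append_append_self_infix (L := L)
    (by rw [Fintype.card_fin, hw, Nat.mul_succ]; omega)
  obtain ⟨X, hX, hXB⟩ := hL B hB
  obtain ⟨Y, hY, hXYX⟩ := List.exists_append_append_infix_of_infix hXB hm
  exact ⟨⟨X, Y, hX, hB ▸ hXB.length_le, hY, hXYX.trans hBmB⟩,
    X ++ Y ++ X, hX.append_append hY, hXYX.trans hBmB⟩
end

section
/- A word w over an alphabet is 2-minimal (contains Z_2 but no proper contiguous subword of w contains Z_2) if and only if either w = [a,a,a] for some letter a, or w = [a] ++ b_1^{j_1} ++ ... ++ b_r^{j_r} ++ [a] where r ≥ 1, the letters a, b_1, ..., b_r are pairwise distinct, and each j_i ∈ {1, 2} (b^j denotes j repetitions of b). -/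
/-- `w` is 2-minimal: it contains `Z₂` but no infix other than `w` itself
contains `Z₂`. -/
def TwoMinimal {α : Type*} (w : List α) : Prop :=
  ContainsZ2 w ∧ ∀ v : List α, v <:+: w → v ≠ w → ¬ ContainsZ2 v

section

variable {α : Type*}

theorem List.IsInfix.infix_tail_or_infix_dropLast {v w : List α} (h : v <:+: w) (hne : v ≠ w) :
    v <:+: w.tail ∨ v <:+: w.dropLast := by
  obtain ⟨s, t, rfl⟩ := h
  rcases s with _ | ⟨c, s⟩
  · have ht : t ≠ [] := by rintro rfl; simp at hne
    right
    rw [List.nil_append, List.dropLast_append_of_ne_nil ht]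
    exact List.infix_append [] v t.dropLast
  · left
    exact List.infix_append s v t

theorem notMem_tail_and_notMem_dropLast_iff {a : α} {l : List α} :
    a ∉ l.tail ∧ a ∉ l.dropLast ↔ a ∉ l ∨ l = [a] := by
  constructor
  · rintro ⟨htail, hdropLast⟩
    rcases l with _ | ⟨c, l⟩
    · simp
    rcases l with _ | ⟨d, l⟩
    · by_cases hca : c = a <;> simp_all [eq_comm]
    · left
      intro ha
      rcases List.mem_cons.mp ha with rfl | hl
      · simp [List.dropLast_cons_cons] at hdropLast
      · exact htail hl
  · rintro (ha | rfl)
    · exact ⟨fun h => ha (List.mem_of_mem_tail h), fun h => ha (List.mem_of_mem_dropLast h)⟩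
    · simp

namespace ContainsZ2

theorem mono {x y : List α} (hx : ContainsZ2 x) (h : x <:+: y) : ContainsZ2 y :=
  let ⟨u, v, hu, hv, hx⟩ := hx
  ⟨u, v, hu, hv, hx.trans h⟩

theorem reverse {w : List α} (h : ContainsZ2 w) : ContainsZ2 w.reverse := by
  obtain ⟨u, v, hu, hv, h⟩ := h
  refine ⟨u.reverse, v.reverse, by simpa, by simpa, ?_⟩
  simpa [List.append_assoc] using h.reverse

end ContainsZ2

theorem not_containsZ2_nil : ¬ContainsZ2 ([] : List α) := by
  rintro ⟨u, v, hu, -, h⟩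
  simp_all [List.infix_nil]

@[simp]
theorem containsZ2_reverse_iff {w : List α} : ContainsZ2 w.reverse ↔ ContainsZ2 w :=
  ⟨fun h => by simpa using h.reverse, ContainsZ2.reverse⟩

theorem containsZ2_iff_exists_infix {w : List α} :
    ContainsZ2 w ↔ ∃ (a : α) (m : List α), m ≠ [] ∧ [a] ++ m ++ [a] <:+: w := by
  constructor
  · rintro ⟨u, v, hu, hv, hinf⟩
    obtain ⟨a, v', rfl⟩ := List.exists_cons_of_ne_nil hv
    refine ⟨a, v' ++ u, by simp [hu], List.IsInfix.trans ⟨[], v', ?_⟩ hinf⟩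
    simp
  · rintro ⟨a, m, hm, hinf⟩
    exact ⟨m, [a], hm, List.cons_ne_nil a [], hinf⟩

theorem containsZ2_cons_iff {b : α} {t : List α} :
    ContainsZ2 (b :: t) ↔ b ∈ t.tail ∨ ContainsZ2 t := by
  constructor
  · rw [containsZ2_iff_exists_infix]
    rintro ⟨a, m, hm, hinf⟩
    rcases List.infix_cons_iff.mp hinf with ⟨r, hr⟩ | hinf
    · obtain ⟨c, m, rfl⟩ := List.exists_cons_of_ne_nil hm
      simp only [List.cons_append, List.append_assoc, List.cons.injEq] at hr
      obtain ⟨rfl, rfl⟩ := hr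
      simp
    · exact Or.inr (containsZ2_iff_exists_infix.mpr ⟨a, m, hm, hinf⟩)
  · rintro (h | h)
    · obtain ⟨c, t, rfl⟩ := List.exists_cons_of_ne_nil (List.ne_nil_of_mem (List.mem_of_mem_tail h))
      obtain ⟨s, r, rfl⟩ := List.append_of_mem (List.tail_cons ▸ h)
      exact containsZ2_iff_exists_infix.mpr ⟨b, c :: s, List.cons_ne_nil c s, ⟨[], r, by simp⟩⟩
    · exact h.mono (List.suffix_cons b t).isInfix

theorem containsZ2_concat_iff {b : α} {t : List α} :
    ContainsZ2 (t ++ [b]) ↔ b ∈ t.dropLast ∨ ContainsZ2 t := by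
  rw [← containsZ2_reverse_iff, List.reverse_concat', containsZ2_cons_iff, List.tail_reverse,
    List.mem_reverse, containsZ2_reverse_iff]

theorem not_containsZ2_cons_iff {b : α} {t : List α} :
    ¬ContainsZ2 (b :: t) ↔ b ∉ t.tail ∧ ¬ContainsZ2 t := by
  rw [containsZ2_cons_iff, not_or]

theorem not_containsZ2_concat_iff {b : α} {t : List α} :
    ¬ContainsZ2 (t ++ [b]) ↔ b ∉ t.dropLast ∧ ¬ContainsZ2 t := by
  rw [containsZ2_concat_iff, not_or]

theorem not_containsZ2_cons {b : α} {t : List α} (hb : b ∉ t) (ht : ¬ContainsZ2 t) :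
    ¬ContainsZ2 (b :: t) :=
  not_containsZ2_cons_iff.mpr ⟨fun h => hb (List.mem_of_mem_tail h), ht⟩

def blockWord (p : List (α × ℕ)) : List α :=
  p.flatMap fun x => List.replicate x.2 x.1

@[simp]
theorem blockWord_cons (x : α × ℕ) (p : List (α × ℕ)) :
    blockWord (x :: p) = List.replicate x.2 x.1 ++ blockWord p :=
  List.flatMap_cons

theorem mem_blockWord {p : List (α × ℕ)} (hp : ∀ x ∈ p, x.2 ≠ 0) {c : α} :
    c ∈ blockWord p ↔ c ∈ p.map Prod.fst := by
  simp only [blockWord, List.mem_flatMap, List.mem_replicate, List.mem_map]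
  constructor
  · rintro ⟨x, hx, -, rfl⟩
    exact ⟨x, hx, rfl⟩
  · rintro ⟨x, hx, rfl⟩
    exact ⟨x, hx, hp x hx, rfl⟩

theorem blockWord_ne_nil {p : List (α × ℕ)} (hp : ∀ x ∈ p, x.2 ≠ 0) (hne : p ≠ []) :
    blockWord p ≠ [] := by
  obtain ⟨x, q, rfl⟩ := List.exists_cons_of_ne_nil hne
  exact List.ne_nil_of_mem ((mem_blockWord hp).mpr (List.mem_map_of_mem (List.mem_cons_self ..)))

theorem not_containsZ2_blockWord : ∀ {p : List (α × ℕ)}, (p.map Prod.fst).Nodup →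
    (∀ x ∈ p, x.2 = 1 ∨ x.2 = 2) → ¬ContainsZ2 (blockWord p)
  | [], _, _ => not_containsZ2_nil
  | (b, j) :: p, hnd, hj => by
    rw [List.map_cons, List.nodup_cons] at hnd
    have hj' : ∀ x ∈ p, x.2 = 1 ∨ x.2 = 2 := fun x hx => hj x (List.mem_cons_of_mem _ hx)
    have hb : b ∉ blockWord p := (mem_blockWord fun x hx => by grind).not.mpr hnd.1
    have hfree : ¬ContainsZ2 (b :: blockWord p) :=
      not_containsZ2_cons hb (not_containsZ2_blockWord hnd.2 hj')
    rcases hj (b, j) List.mem_cons_self with rfl | rfl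
    · simpa using hfree
    · simpa using not_containsZ2_cons_iff.mpr ⟨hb, hfree⟩

theorem exists_blockWord_of_not_containsZ2 : ∀ {m : List α}, ¬ContainsZ2 m →
    ∃ p : List (α × ℕ), (p.map Prod.fst).Nodup ∧ (∀ x ∈ p, x.2 = 1 ∨ x.2 = 2) ∧
      m = blockWord p
  | [], _ => ⟨[], List.nodup_nil, by simp, rfl⟩
  | [b], _ => ⟨[(b, 1)], by simp, by simp, rfl⟩
  | b :: c :: t, h => by
    obtain ⟨hbt, hct⟩ := not_containsZ2_cons_iff.mp h
    by_cases hbc : b = c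
    · subst hbc
      obtain ⟨p, hnd, hj, rfl⟩ :=
        exists_blockWord_of_not_containsZ2 (not_containsZ2_cons_iff.mp hct).2
      refine ⟨(b, 2) :: p, ?_, by grind, by simp [List.replicate]⟩
      rw [List.map_cons, List.nodup_cons, ← mem_blockWord fun x hx => by grind]
      exact ⟨hbt, hnd⟩
    · obtain ⟨p, hnd, hj, hp⟩ := exists_blockWord_of_not_containsZ2 hct
      refine ⟨(b, 1) :: p, ?_, by grind, by simp [← hp]⟩
      rw [List.map_cons, List.nodup_cons, ← mem_blockWord fun x hx => by grind, ← hp]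
      exact ⟨fun hb => (List.mem_cons.mp hb).elim hbc hbt, hnd⟩

theorem twoMinimal_iff_exists_bordered {w : List α} :
    TwoMinimal w ↔ ∃ (a : α) (m : List α), m ≠ [] ∧ w = [a] ++ m ++ [a] ∧
      ¬ContainsZ2 (a :: m) ∧ ¬ContainsZ2 (m ++ [a]) := by
  constructor
  · rintro ⟨hw, hmin⟩
    obtain ⟨a, m, hm, hinf⟩ := containsZ2_iff_exists_infix.mp hw
    have hz : ContainsZ2 ([a] ++ m ++ [a]) :=
      containsZ2_iff_exists_infix.mpr ⟨a, m, hm, List.infix_refl _⟩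
    obtain rfl : [a] ++ m ++ [a] = w := by_contra fun hne => hmin _ hinf hne hz
    refine ⟨a, m, hm, rfl, hmin _ ⟨[], [a], by simp⟩ ?_, hmin _ ⟨[a], [], by simp⟩ ?_⟩ <;>
      exact fun h => by simpa using congrArg List.length h
  · rintro ⟨a, m, hm, rfl, hfree, hfree'⟩
    refine ⟨containsZ2_iff_exists_infix.mpr ⟨a, m, hm, List.infix_refl _⟩, fun v hv hne hz => ?_⟩
    rcases hv.infix_tail_or_infix_dropLast hne with h | h
    · exact hfree' (hz.mono (by simpa using h))
    · exact hfree (hz.mono (by simpa [List.dropLast_cons_of_ne_nil] using h))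

theorem twoMinimal_iff_exists_bordered_free {w : List α} :
    TwoMinimal w ↔ ∃ (a : α) (m : List α), m ≠ [] ∧ w = [a] ++ m ++ [a] ∧
      (a ∉ m ∨ m = [a]) ∧ ¬ContainsZ2 m := by
  simp only [twoMinimal_iff_exists_bordered, not_containsZ2_cons_iff, not_containsZ2_concat_iff,
    ← notMem_tail_and_notMem_dropLast_iff]
  grind

end

/-- Characterisation of 2-minimal words: `w` is 2-minimal iff `w = aaa` for some
letter `a`, or `w = a b₁^{j₁} ⋯ b_r^{j_r} a` with `r ≥ 1`, the letters
`a, b₁, …, b_r` pairwise distinct and each `jᵢ ∈ {1,2}`. -/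
theorem twoMinimal_iff {α : Type*} (w : List α) :
    TwoMinimal w ↔
      (∃ a : α, w = [a, a, a]) ∨
      (∃ (a : α) (p : List (α × ℕ)), p ≠ [] ∧
        (a :: p.map Prod.fst).Nodup ∧
        (∀ x ∈ p, x.2 = 1 ∨ x.2 = 2) ∧
        w = [a] ++ p.flatMap (fun x => List.replicate x.2 x.1) ++ [a]) := by
  change _ ↔ _ ∨ ∃ (a : α) (p : List (α × ℕ)), _ ∧ _ ∧ _ ∧ w = [a] ++ blockWord p ++ [a]
  rw [twoMinimal_iff_exists_bordered_free]
  constructor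
  · rintro ⟨a, m, hm, rfl, ha | rfl, hfree⟩
    · obtain ⟨p, hnd, hj, rfl⟩ := exists_blockWord_of_not_containsZ2 hfree
      refine Or.inr ⟨a, p, ?_, ?_, hj, rfl⟩
      · rintro rfl; exact hm rfl
      · rw [List.nodup_cons, ← mem_blockWord fun x hx => by grind]
        exact ⟨ha, hnd⟩
    · exact Or.inl ⟨a, rfl⟩
  · rintro (⟨a, rfl⟩ | ⟨a, p, hp, hnd, hj, rfl⟩)
    · exact ⟨a, [a], List.cons_ne_nil a [], rfl, Or.inr rfl,
        not_containsZ2_cons List.not_mem_nil not_containsZ2_nil⟩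
    · rw [List.nodup_cons, ← mem_blockWord fun x hx => by grind] at hnd
      exact ⟨a, blockWord p, blockWord_ne_nil (fun x hx => by grind) hp, rfl, Or.inl hnd.1,
        not_containsZ2_blockWord hnd.2 hj⟩
end

section
/- The number of 2-minimal words over an alphabet of size q is at most 2^q · q! - 1. -/
open List Nat

section Words

variable {α : Type*}

theorem ContainsZ2.mono_s6 {x y : List α} (hx : ContainsZ2 x) (h : x <:+: y) : ContainsZ2 y :=
  let ⟨u, v, hu, hv, hinf⟩ := hx
  ⟨u, v, hu, hv, hinf.trans h⟩

theorem containsZ2_of_infix {b : α} {v x : List α} (hv : v ≠ []) (h : b :: v ++ [b] <:+: x) :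
    ContainsZ2 x :=
  ⟨v, [b], hv, cons_ne_nil b [], by simpa using h⟩

theorem eq_cons_of_not_containsZ2_cons {b : α} {t : List α} (h : ¬ ContainsZ2 (b :: t))
    (hb : b ∈ t) : ∃ t', t = b :: t' ∧ b ∉ t' := by
  obtain ⟨s, t', rfl⟩ := append_of_mem hb
  obtain rfl : s = [] := by
    by_contra hs
    exact h (containsZ2_of_infix (b := b) hs ⟨[], t', by simp⟩)
  refine ⟨t', rfl, fun hb' => ?_⟩
  obtain ⟨s', t'', rfl⟩ := append_of_mem hb'
  exact h (containsZ2_of_infix (b := b) (cons_ne_nil b s') ⟨[], t'', by simp⟩)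

theorem TwoMinimal.exists_eq_cons_append {w : List α} (h : TwoMinimal w) :
    ∃ a u, u ≠ [] ∧ w = a :: u ++ [a] ∧ ¬ ContainsZ2 (a :: u) ∧ ¬ ContainsZ2 (u ++ [a]) := by
  obtain ⟨⟨u, v, hu, hv, hinf⟩, hmin⟩ := h
  obtain ⟨a, v', rfl⟩ := exists_cons_of_ne_nil hv
  have hp : a :: (v' ++ u) ++ [a] <:+: w :=
    (show a :: (v' ++ u) ++ [a] <+: a :: v' ++ u ++ a :: v' from ⟨v', by simp⟩).isInfix.trans hinf
  obtain rfl : a :: (v' ++ u) ++ [a] = w := by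
    by_contra hne
    exact hmin _ hp hne (containsZ2_of_infix (by simp [hu]) (infix_refl _))
  refine ⟨a, v' ++ u, by simp [hu], rfl, hmin _ ⟨[], [a], by simp⟩ ?_, hmin _ ⟨[a], [], by simp⟩ ?_⟩
  all_goals exact fun h => by simpa using congrArg length h

variable [DecidableEq α]

def doubleLetters (T : Finset α) (M : List α) : List α :=
  M.flatMap fun b => if b ∈ T then [b, b] else [b]

theorem doubleLetters_cons (T : Finset α) (b : α) (M : List α) :
    doubleLetters T (b :: M) = (if b ∈ T then [b, b] else [b]) ++ doubleLetters T M := rfl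

theorem doubleLetters_congr {T E : Finset α} {M : List α} (h : ∀ b ∈ M, b ∈ T ↔ b ∈ E) :
    doubleLetters T M = doubleLetters E M :=
  flatMap_congr fun b hb => by simp only [h b hb]

theorem exists_doubleLetters_of_not_containsZ2 (y : List α) (hy : ¬ ContainsZ2 y) :
    ∃ (M : List α) (E : Finset α), M.Nodup ∧ M ⊆ y ∧ y = doubleLetters E M := by
  match y with
  | [] => exact ⟨[], ∅, nodup_nil, Subset.refl _, rfl⟩
  | b :: t =>
    by_cases hb : b ∈ t
    · obtain ⟨t', rfl, hbt'⟩ := eq_cons_of_not_containsZ2_cons hy hb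
      obtain ⟨M, E, hM, hMt', rfl⟩ := exists_doubleLetters_of_not_containsZ2 t'
        fun h => hy (h.mono_s6 ⟨[b, b], [], by simp⟩)
      have hbM : b ∉ M := fun h => hbt' (hMt' h)
      refine ⟨b :: M, insert b E, nodup_cons.2 ⟨hbM, hM⟩, ?_, ?_⟩
      · exact cons_subset_cons b fun c hc => mem_cons_of_mem b (hMt' hc)
      · rw [doubleLetters_cons, if_pos (Finset.mem_insert_self b E),
          doubleLetters_congr (T := insert b E) (E := E) (M := M) fun c hc => ?_]
        · rfl
        · rw [Finset.mem_insert, or_iff_right (ne_of_mem_of_not_mem hc hbM)]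
    · obtain ⟨M, E, hM, hMt, rfl⟩ := exists_doubleLetters_of_not_containsZ2 t
        fun h => hy (h.mono_s6 (suffix_cons b _).isInfix)
      have hbM : b ∉ M := fun h => hb (hMt h)
      refine ⟨b :: M, E.erase b, nodup_cons.2 ⟨hbM, hM⟩, cons_subset_cons b hMt, ?_⟩
      rw [doubleLetters_cons, if_neg (Finset.notMem_erase b E),
        doubleLetters_congr (T := E.erase b) (E := E) (M := M) fun c hc => ?_]
      · rfl
      · rw [Finset.mem_erase, and_iff_right (ne_of_mem_of_not_mem hc hbM)]
termination_by y.length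

def twoMinimalWord (a : α) (M : List α) (T : Finset α) : List α :=
  if M = [] then [a, a, a] else a :: doubleLetters T M ++ [a]

theorem twoMinimalWord_congr {a : α} {M : List α} {T E : Finset α}
    (h : ∀ b ∈ M, b ∈ T ↔ b ∈ E) : twoMinimalWord a M T = twoMinimalWord a M E := by
  rw [twoMinimalWord, twoMinimalWord, doubleLetters_congr h]

theorem TwoMinimal.exists_eq_twoMinimalWord {w : List α} (h : TwoMinimal w) :
    ∃ a M E, M.Nodup ∧ a ∉ M ∧ w = twoMinimalWord a M E := by
  obtain ⟨a, u, hu, rfl, hau, hua⟩ := h.exists_eq_cons_append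
  by_cases ha : a ∈ u
  · obtain ⟨u', rfl, -⟩ := eq_cons_of_not_containsZ2_cons hau ha
    obtain rfl : u' = [] := by
      by_contra hu'
      exact hua (containsZ2_of_infix hu' (infix_refl _))
    exact ⟨a, [], ∅, nodup_nil, not_mem_nil, rfl⟩
  · obtain ⟨M, E, hM, hMu, rfl⟩ :=
      exists_doubleLetters_of_not_containsZ2 u fun h => hau (h.mono_s6 (suffix_cons a u).isInfix)
    have hM0 : M ≠ [] := by
      rintro rfl
      exact hu rfl
    exact ⟨a, M, E, hM, fun h => ha (hMu h), by rw [twoMinimalWord, if_neg hM0]⟩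

/-- In the code `(a :: τ, T)` of `twoMinimalWord a M E` built in `exists_perm_decodeTwoMinimal_eq`,
`τ` lists the letters outside `a :: M` and then `M`, and `T` consists of the doubled letters of
`M`, every letter outside `a :: M` except the last one, and `a` if there is no such letter. -/
def decodeTwoMinimal : List α → Finset α → List α
  | [], _ => []
  | a :: τ, T => twoMinimalWord a (if a ∈ T then τ else (τ.dropWhile (· ∈ T)).tail) T

variable [Fintype α]

theorem exists_perm_decodeTwoMinimal_eq (a : α) {M : List α} (hM : M.Nodup) (haM : a ∉ M)
    (E : Finset α) : ∃ τ T, a :: τ ~ Finset.univ.toList ∧ T ≠ Finset.univ.erase a ∧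
      decodeTwoMinimal (a :: τ) T = twoMinimalWord a M E := by
  set rest := (Finset.univ \ (a :: M).toFinset).toList
  have hrest : ∀ b, b ∈ rest ↔ b ≠ a ∧ b ∉ M := by simp [rest]
  have hperm : a :: (rest ++ M) ~ Finset.univ.toList := by
    refine perm_middle.symm.trans (perm_of_nodup_nodup_toFinset_eq ?_ (Finset.nodup_toList _) ?_)
    · exact (Finset.nodup_toList _).append (nodup_cons.2 ⟨haM, hM⟩) fun b hb hb' => by
        simp_all
    · ext b
      by_cases b = a <;> by_cases b ∈ M <;> simp_all
  rcases eq_nil_or_concat rest with hr | ⟨R, c, hr⟩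
  · refine ⟨M, insert a E, by simpa [hr] using hperm, fun h => ?_, ?_⟩
    · simpa [h] using Finset.mem_insert_self a E
    · rw [decodeTwoMinimal, if_pos (Finset.mem_insert_self a E)]
      exact twoMinimalWord_congr fun b hb => by
        rw [Finset.mem_insert, or_iff_right (ne_of_mem_of_not_mem hb haM)]
  · have hR : ∀ b ∈ R, b ≠ a ∧ b ∉ M := fun b hb => (hrest b).1 (by simp [hr, hb])
    obtain ⟨hca, hcM⟩ : c ≠ a ∧ c ∉ M := (hrest c).1 (by simp [hr])
    have haR : a ∉ R := fun h => (hR a h).1 rfl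
    have hMR : ∀ b ∈ M, b ∉ R := fun b hb h => (hR b h).2 hb
    have hcR : c ∉ R := ((nodup_concat R c).1 (hr ▸ Finset.nodup_toList _)).1
    set T := R.toFinset ∪ E.filter (· ∈ M)
    have hT : ∀ b ∈ M, b ∈ T ↔ b ∈ E := fun b hb => by
      simp [T, hb, hMR b hb]
    refine ⟨R ++ c :: M, T, by simpa [hr] using hperm, fun h => ?_, ?_⟩
    · have : c ∈ T := by simp [h, hca]
      simp [T, hcR, hcM] at this
    · have haT : a ∉ T := by simp [T, haM, haR]
      have hcT : c ∉ T := by simp [T, hcR, hcM]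
      rw [decodeTwoMinimal, if_neg haT, dropWhile_append_of_pos fun b hb => by simp [T, hb],
        dropWhile_cons_of_neg (by simpa using hcT), tail_cons]
      exact twoMinimalWord_congr hT

open Finset in
theorem ncard_setOf_twoMinimal_le :
    {w : List α | TwoMinimal w}.ncard ≤ (Fintype.card α)! * 2 ^ Fintype.card α - 1 := by
  classical
  set D := (univ : Finset α).toList.permutations.toFinset ×ˢ (univ : Finset (Finset α))
  set P : List α × Finset α → Prop := fun p => ∃ a τ, p.1 = a :: τ ∧ p.2 ≠ univ.erase a
  have hsub :
      {w : List α | TwoMinimal w} ⊆ (D.filter P).image fun p => decodeTwoMinimal p.1 p.2 := by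
    intro w hw
    obtain ⟨a, M, E, hM, haM, rfl⟩ := TwoMinimal.exists_eq_twoMinimalWord hw
    obtain ⟨τ, T, hperm, hT, hdec⟩ := exists_perm_decodeTwoMinimal_eq a hM haM E
    exact mem_image.2 ⟨(a :: τ, T), by simp [D, P, hperm, hT], hdec⟩
  have hlt : (D.filter P).card < D.card := by
    refine card_lt_card (filter_ssubset.2 ?_)
    rcases h : (univ : Finset α).toList with _ | ⟨a, τ⟩
    · exact ⟨([], ∅), by simp [D, h], by simp [P]⟩
    · exact ⟨(a :: τ, univ.erase a), by simp [D, ← h], by simp [P]⟩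
  have hD : D.card = (Fintype.card α)! * 2 ^ Fintype.card α := by
    rw [card_product, toFinset_card_of_nodup (nodup_permutations _ (nodup_toList _)),
      length_permutations, length_toList, Finset.card_univ, Finset.card_univ, Fintype.card_finset]
  calc {w : List α | TwoMinimal w}.ncard
      ≤ ((D.filter P).image fun p => decodeTwoMinimal p.1 p.2).card :=
        (Set.ncard_le_ncard hsub (finite_toSet _)).trans_eq (Set.ncard_coe_finset _)
    _ ≤ (D.filter P).card := card_image_le
    _ ≤ (Fintype.card α)! * 2 ^ Fintype.card α - 1 := by omega

end Words

/-- The number of 2-minimal words over an alphabet of size `q` is at most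
`2^q · q! - 1`. -/
theorem twoMinimal_count (q : ℕ) :
    {w : List (Fin q) | TwoMinimal w}.ncard ≤ 2 ^ q * q.factorial - 1 := by
  simpa [mul_comm] using ncard_setOf_twoMinimal_le (α := Fin q)
end

section
/- f(3,q) ≤ 2^{q+1} (q+1)!: every word of length 2^{q+1}(q+1)! over an alphabet of size q contains a copy of Z_3. -/
/-!
Let `n = card α`. Cut `w` into `n! * 2^n` blocks of length `2n + 2` and look at the first
`2n + 1` letters of each block. A word without an infix `a u a`, `u ≠ []`, consists of runs of
length one or two of distinct letters, so it has length at most `2n`; hence every window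
contains such an infix, and a shortest one `x u x` has `u` made of distinct runs and
`x ∉ u` unless `u = x`. The data `(x, runs of u)` is recorded by an ordering of `α` that starts
with `x` and the letters of `u`, together with a bit vector holding the run lengths followed by a
`1`. That vector is never zero, so there are fewer data than windows: two windows carry the same
`x u x`, and the letter closing the first block separates them, giving `x u x C x u x` with
`C ≠ []`.
-/

open List Fintype

namespace Zimin

variable {α : Type*}

def ofRuns (P : List (α × Bool)) : List α :=
  P.flatMap fun p => if p.2 then [p.1, p.1] else [p.1]

@[simp] lemma ofRuns_nil : ofRuns ([] : List (α × Bool)) = [] := rfl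

@[simp] lemma ofRuns_cons (p : α × Bool) (P : List (α × Bool)) :
    ofRuns (p :: P) = (if p.2 then [p.1, p.1] else [p.1]) ++ ofRuns P := rfl

lemma mem_ofRuns {a : α} {P : List (α × Bool)} : a ∈ ofRuns P ↔ a ∈ P.map Prod.fst := by
  induction P with
  | nil => simp
  | cons p P ih => rcases p with ⟨b, _ | _⟩ <;> simp [ih]

lemma length_ofRuns_le (P : List (α × Bool)) : (ofRuns P).length ≤ 2 * P.length := by
  induction P with
  | nil => simp
  | cons p P ih => rcases p with ⟨b, _ | _⟩ <;> simp <;> omega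

def NoDistantRepeat (w : List α) : Prop :=
  ∀ a u, u ≠ [] → ¬ a :: u ++ [a] <:+: w

namespace NoDistantRepeat

variable {a b : α} {w : List α}

lemma of_cons (h : NoDistantRepeat (a :: w)) : NoDistantRepeat w :=
  fun c u hu hinf => h c u hu (infix_cons hinf)

lemma not_mem_of_cons_cons (h : NoDistantRepeat (a :: b :: w)) : a ∉ w := by
  intro ha
  obtain ⟨s, t, rfl⟩ := append_of_mem ha
  exact h a (b :: s) (cons_ne_nil _ _) ⟨[], t, by simp⟩

lemma exists_ofRuns : ∀ {w : List α}, NoDistantRepeat w →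
    ∃ P : List (α × Bool), (P.map Prod.fst).Nodup ∧ ofRuns P = w
  | [], _ => ⟨[], by simp⟩
  | [a], _ => ⟨[(a, false)], by simp⟩
  | a :: b :: w, h => by
    classical
    have haw : a ∉ w := h.not_mem_of_cons_cons
    by_cases hab : a = b
    · subst hab
      obtain ⟨P, hP, hw⟩ := exists_ofRuns h.of_cons.of_cons
      refine ⟨(a, true) :: P, ?_, by simp [hw]⟩
      simpa [← mem_ofRuns, hw] using And.intro haw hP
    · obtain ⟨P, hP, hw⟩ := exists_ofRuns h.of_cons
      refine ⟨(a, false) :: P, ?_, by simp [hw]⟩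
      simp only [map_cons, nodup_cons, ← mem_ofRuns, hw, mem_cons, not_or]
      exact ⟨⟨hab, haw⟩, hP⟩

lemma length_le [Fintype α] (h : NoDistantRepeat w) : w.length ≤ 2 * card α := by
  obtain ⟨P, hP, rfl⟩ := h.exists_ofRuns
  calc (ofRuns P).length ≤ 2 * P.length := length_ofRuns_le P
    _ = 2 * (P.map Prod.fst).length := by rw [length_map]
    _ ≤ 2 * card α := Nat.mul_le_mul_left 2 hP.length_le_card

end NoDistantRepeat

lemma exists_minimal_repeat_infix {v : List α} (h : ¬ NoDistantRepeat v) :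
    ∃ x u, u ≠ [] ∧ NoDistantRepeat u ∧ (u = [x] ∨ x ∉ u) ∧ x :: u ++ [x] <:+: v := by
  classical
  have hex : ∃ n, ∃ a u, u ≠ [] ∧ u.length = n ∧ a :: u ++ [a] <:+: v := by
    simp only [NoDistantRepeat, not_forall, not_not] at h
    obtain ⟨a, u, hu, h⟩ := h
    exact ⟨_, a, u, hu, rfl, h⟩
  obtain ⟨x, u, hu, hlen, hinf⟩ := Nat.find_spec hex
  have hmin {a u'} (hu' : u' ≠ []) (h' : a :: u' ++ [a] <:+: x :: u ++ [x]) :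
      u.length ≤ u'.length :=
    hlen ▸ Nat.find_min' hex ⟨a, u', hu', rfl, h'.trans hinf⟩
  refine ⟨x, u, hu, fun a u' hu' h' => ?_, ?_, hinf⟩
  · have hle := hmin hu' (h'.trans ⟨[x], [x], by simp⟩)
    have := h'.length_le
    simp only [cons_append, length_cons, length_append] at this
    omega
  · by_cases hxu : x ∈ u
    · obtain ⟨s, t, rfl⟩ := append_of_mem hxu
      rcases s with _ | ⟨c, s⟩
      · rcases t with _ | ⟨c, t⟩
        · exact Or.inl rfl
        · have := hmin (a := x) (cons_ne_nil c t) ⟨[x], [], by simp⟩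
          simp at this
      · have := hmin (a := x) (cons_ne_nil c s) ⟨[], t ++ [x], by simp⟩
        simp at this
    · exact Or.inr hxu

/-- The empty run list encodes the degenerate window `x x x`. -/
def middle (x : α) : List (α × Bool) → List α
  | [] => [x]
  | p :: P => ofRuns (p :: P)

lemma middle_ne_nil (x : α) (P : List (α × Bool)) : middle x P ≠ [] := by
  rcases P with _ | ⟨⟨a, _ | _⟩, P⟩ <;> simp [middle]

lemma exists_middle_infix [Fintype α] {v : List α} (hv : 2 * card α < v.length) :
    ∃ x P, (x :: P.map Prod.fst).Nodup ∧ x :: middle x P ++ [x] <:+: v := by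
  have hrep : ¬ NoDistantRepeat v := fun h => (h.length_le.trans_lt hv).false
  obtain ⟨x, u, hu, hred, hxu | hxu, hinf⟩ := exists_minimal_repeat_infix hrep
  · exact ⟨x, [], by simp, by simpa [middle, hxu] using hinf⟩
  · obtain ⟨P, hP, rfl⟩ := hred.exists_ofRuns
    rcases P with _ | ⟨p, P⟩
    · exact absurd rfl hu
    · refine ⟨x, p :: P, ?_, hinf⟩
      rw [nodup_cons, ← mem_ofRuns]
      exact ⟨hxu, hP⟩

lemma exists_equiv_fin_extending [Fintype α] {L : List α} (hL : L.Nodup) :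
    ∃ e : Fin (card α) ≃ α,
      ∀ (i : Fin (card α)) (hi : i.val < L.length), e i = L[i.val] := by
  classical
  set L' := L ++ Finset.univ.toList.filter (· ∉ L)
  have hnd : L'.Nodup := nodup_append.2
    ⟨hL, (Finset.nodup_toList _).filter _, fun a ha b hb hab => by simp_all⟩
  let e := hnd.getEquivOfForallMemList L' fun y => by by_cases hy : y ∈ L <;> simp [L', hy]
  have hlen : L'.length = card α := by simpa using Fintype.card_congr e
  refine ⟨(finCongr hlen.symm).trans e, fun i hi => ?_⟩
  simp [e, Nodup.getEquivOfForallMemList, L', getElem_append_left hi]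

lemma eq_of_getD_append_true {n : ℕ} {bs bs' : List Bool} (h : bs.length < n)
    (h' : bs'.length < n)
    (heq : ∀ i < n, (bs ++ [true]).getD i false = (bs' ++ [true]).getD i false) :
    bs = bs' := by
  have hlen {c c' : List Bool} (hc' : c'.length < n)
      (hcc' : ∀ i < n, (c ++ [true]).getD i false = (c' ++ [true]).getD i false) :
      c'.length ≤ c.length := by
    by_contra! hlt
    have := hcc' c'.length hc'
    rw [getD_eq_default _ _ (by simpa using hlt)] at this
    simp [getD_eq_getElem?_getD] at this
  have hl : bs.length = bs'.length :=
    le_antisymm (hlen h fun i hi => (heq i hi).symm) (hlen h' heq)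
  refine ext_getElem hl fun i hi hi' => ?_
  have := heq i (hi.trans h)
  rwa [getD_append _ _ _ _ hi, getD_append _ _ _ _ hi', getD_eq_getElem _ _ hi,
    getD_eq_getElem _ _ hi'] at this

lemma exists_lt_eq_of_nodup [Fintype α] {K : ℕ} (hK : (card α).factorial * 2 ^ card α ≤ K)
    (x : Fin K → α) (P : Fin K → List (α × Bool))
    (hP : ∀ t, (x t :: (P t).map Prod.fst).Nodup) :
    ∃ t t', t < t' ∧ x t = x t' ∧ P t = P t' := by
  classical
  choose e he using fun t => exists_equiv_fin_extending (hP t)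
  -- the trailing `true` records the length of `P t`, and makes every flag vector nonzero
  let flags (t : Fin K) (i : Fin (card α)) : Bool := ((P t).map Prod.snd ++ [true]).getD i false
  have hlen t : (P t).length < card α := by simpa using (hP t).length_le_card
  have hcode {t t'} (he' : e t = e t') (hflags : flags t = flags t') :
      x t = x t' ∧ P t = P t' := by
    have hsnd : (P t).map Prod.snd = (P t').map Prod.snd :=
      eq_of_getD_append_true (by simpa using hlen t) (by simpa using hlen t')
        fun i hi => congrFun hflags ⟨i, hi⟩
    have hl : (P t).length = (P t').length := by simpa using congrArg length hsnd
    have hfst : x t :: (P t).map Prod.fst = x t' :: (P t').map Prod.fst :=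
      ext_getElem (by simp [hl]) fun i hi hi' => by
        have hiα : i < card α := hi.trans_le (hP t).length_le_card
        rw [← he t ⟨i, hiα⟩ hi, ← he t' ⟨i, hiα⟩ hi', he']
    simp only [cons.injEq] at hfst
    exact ⟨hfst.1, (zip_of_prod hfst.2 hsnd).trans (zip_of_prod rfl rfl).symm⟩
  by_contra! hne
  have hinj : Function.Injective fun t => (e t, flags t) := by
    intro t t' h
    obtain ⟨hx, hP⟩ := hcode (Prod.ext_iff.1 h).1 (Prod.ext_iff.1 h).2
    rcases lt_trichotomy t t' with hlt | heq | hlt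
    · exact absurd hP (hne t t' hlt hx)
    · exact heq
    · exact absurd hP.symm (hne t' t hlt hx.symm)
  have hmiss : ((equivFin α).symm, fun _ => false) ∉ Set.range fun t => (e t, flags t) := by
    rintro ⟨t, ht⟩
    have := congrFun (Prod.ext_iff.1 ht).2 ⟨(P t).length, hlen t⟩
    simp [flags, getD_eq_getElem?_getD] at this
  have := card_lt_of_injective_of_notMem _ hinj hmiss
  simp [card_equiv (equivFin α).symm] at this
  omega

lemma exists_append_infix_append_cons {U l₁ l₂ : List α} (a : α) (h₁ : U <:+: l₁)
    (h₂ : U <:+: l₂) : ∃ C, C ≠ [] ∧ U ++ C ++ U <:+: l₁ ++ a :: l₂ := by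
  obtain ⟨s₁, t₁, rfl⟩ := h₁
  obtain ⟨s₂, t₂, rfl⟩ := h₂
  exact ⟨t₁ ++ a :: s₂, by simp, s₁, t₂, by simp⟩

lemma take_drop_infix_take (l : List α) (i k : ℕ) : (l.drop i).take k <:+: l.take (i + k) := by
  rw [take_add]
  exact (suffix_append _ _).isInfix

lemma take_drop_infix_drop (l : List α) {i j : ℕ} (k : ℕ) (hij : i ≤ j) :
    (l.drop j).take k <:+: l.drop i := by
  rw [← Nat.add_sub_cancel' hij, ← drop_drop]
  exact (take_prefix _ _).isInfix.trans (drop_suffix _ _).isInfix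

theorem exists_zimin3_infix [Fintype α] {w : List α}
    (hw : (2 * card α + 2) * ((card α).factorial * 2 ^ card α) ≤ w.length) :
    ∃ A B C : List α, A ≠ [] ∧ B ≠ [] ∧ C ≠ [] ∧
      A ++ B ++ A ++ C ++ A ++ B ++ A <:+: w := by
  set b := 2 * card α + 2
  set K := (card α).factorial * 2 ^ card α
  have hblock {t : ℕ} (ht : t < K) : b * t + b ≤ w.length :=
    (Nat.mul_succ b t ▸ Nat.mul_le_mul_left b ht).trans hw
  choose x P hP hinf using fun t : Fin K =>
    exists_middle_infix (v := (w.drop (b * t)).take (b - 1)) (by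
      have := hblock t.isLt
      simp only [length_take, length_drop]
      omega)
  obtain ⟨t, t', hlt, hx, hP⟩ := exists_lt_eq_of_nodup le_rfl x P hP
  set n := b * t + (b - 1)
  have hn : n < w.length := by have := hblock t.isLt; omega
  have h₁ := (hinf t).trans (take_drop_infix_take w _ (b - 1))
  have h₂ := (hinf t').trans (take_drop_infix_drop w (i := n + 1) (b - 1) (by
    have := Nat.mul_succ b t ▸ Nat.mul_le_mul_left b (Fin.lt_def.1 hlt)
    omega))
  rw [← hx, ← hP] at h₂
  obtain ⟨C, hC, hUCU⟩ := exists_append_infix_append_cons w[n] h₁ h₂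
  refine ⟨[x t], middle (x t) (P t), C, cons_ne_nil _ _, middle_ne_nil _ _, hC, ?_⟩
  rw [← drop_eq_getElem_cons hn, take_append_drop] at hUCU
  simpa only [append_assoc, cons_append, singleton_append, nil_append] using hUCU

end Zimin

/-- `f(3,q) ≤ 2^{q+1} (q+1)!`: every word of length `2^{q+1}(q+1)!` over an
alphabet of size `q` contains a copy of `Z₃ = abacaba`. -/
theorem f_three_upper (q : ℕ) (w : List (Fin q))
    (hw : w.length = 2 ^ (q + 1) * (q + 1).factorial) :
    ∃ A B C : List (Fin q), A ≠ [] ∧ B ≠ [] ∧ C ≠ [] ∧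
      (A ++ B ++ A ++ C ++ A ++ B ++ A) <:+: w :=
  Zimin.exists_zimin3_infix (by
    rw [hw, Fintype.card_fin, Nat.factorial_succ, pow_succ]
    apply le_of_eq
    ring)
end

section
/- If a word w contains no two disjoint identical contiguous subwords of length L separated by at least one letter (i.e., there are no nonempty words u and words X of length L with X ++ u ++ X an infix of w), and every copy of Z_n in w has length at least L, then w contains no copy of Z_{n+1}. -/
/-- If `w` contains no two disjoint identical length-`L` subwords separated by at
least one letter, and every copy of `Z_n` occurring in `w` has length at least
`L`, then `w` contains no copy of `Z_{n+1}`. -/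
theorem no_znplus1 {α : Type*} (n L : ℕ) (w : List α)
    (hrep : ¬ ∃ (X u : List α), X.length = L ∧ u ≠ [] ∧ (X ++ u ++ X) <:+: w)
    (hlong : ∀ X : List α, IsZiminCopy n X → X <:+: w → L ≤ X.length) :
    ¬ ContainsZimin (n + 1) w := by
  rintro ⟨Y, ⟨σ, hσ, hY⟩, hinf⟩
  set A := (Zimin n).flatMap σ with hA
  have hYeq : Y = A ++ σ (n + 1) ++ A := by
    simp [hY, Zimin, hA, List.flatMap_append]
  have hAinf : A <:+: w := by
    refine List.IsInfix.trans ?_ hinf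
    rw [hYeq]
    exact ((A.prefix_append _).trans (List.prefix_append _ _)).isInfix
  have hL : L ≤ A.length := hlong A ⟨σ, hσ, rfl⟩ hAinf
  apply hrep
  refine ⟨A.take L, A.drop L ++ σ (n + 1), by simp [hL], by simp [hσ (n+1)], ?_⟩
  refine List.IsInfix.trans ?_ hinf
  rw [hYeq]
  have : A.take L ++ (A.drop L ++ σ (n + 1)) ++ A.take L
      = (A ++ σ (n + 1) ++ A.take L : List α) := by
    simp [← List.append_assoc, List.take_append_drop]
  rw [this]
  exact ⟨[], A.drop L, by simp⟩
end

section
/- If w = u_1 d u_2 d ... d u_M is formed by concatenating M ≥ 2 pairwise distinct words u_i (none containing the letter d) separated by single occurrences of a letter d, each u_i avoids Z_n, and for consecutive i the distinguished letters alternate so that any Z_{n-1}-copy avoiding both distinguished letters is impossible within u_i and u_{i+1}, then w avoids Z_{n+1}. -/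
namespace List

variable {α : Type*}

theorem eq_append_cons_of_mem_last {a : α} {xs : List α} (h : a ∈ xs) :
    ∃ as bs, xs = as ++ a :: bs ∧ a ∉ bs := by
  obtain ⟨as, bs, hxs, has⟩ := eq_append_cons_of_mem (mem_reverse.2 h)
  exact ⟨bs.reverse, as.reverse, by simpa using congrArg reverse hxs, by simpa using has⟩

theorem eq_of_append_cons_eq_of_nodup {a : α} {l₁ l₂ r₁ r₂ : List α}
    (hnd : (l₁ ++ a :: r₁).Nodup) (h : l₁ ++ a :: r₁ = l₂ ++ a :: r₂) : l₁ = l₂ := by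
  classical
  have h₁ : a ∉ l₁ := fun ha => (nodup_middle.1 hnd).notMem (mem_append_left r₁ ha)
  have h₂ : a ∉ l₂ := fun ha => (nodup_middle.1 (h ▸ hnd)).notMem (mem_append_left r₂ ha)
  have hlen := congrArg (idxOf a) h
  simp only [idxOf_append_of_notMem h₁, idxOf_append_of_notMem h₂, idxOf_cons_self] at hlen
  exact (append_inj h (by omega)).1

variable [DecidableEq α] {d : α}

theorem exists_eq_append_cons_of_count_eq_one {l : List α} (h : l.count d = 1) :
    ∃ x y, l = x ++ d :: y ∧ d ∉ x ∧ d ∉ y := by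
  obtain ⟨x, y, rfl, hx⟩ := eq_append_cons_of_mem (count_pos_iff.1 (by omega : 0 < l.count d))
  simp only [count_append, count_cons_self, count_eq_zero.2 hx] at h
  exact ⟨x, y, rfl, hx, count_eq_zero.1 (by omega)⟩

theorem exists_eq_append_cons_append_cons_of_two_le_count {l : List α}
    (h : 2 ≤ l.count d) : ∃ x y z, l = x ++ d :: (y ++ d :: z) ∧ d ∉ y := by
  obtain ⟨x, r, rfl, hx⟩ := eq_append_cons_of_mem (count_pos_iff.1 (by omega : 0 < l.count d))
  simp only [count_append, count_cons_self, count_eq_zero.2 hx] at h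
  obtain ⟨y, z, rfl, hy⟩ := eq_append_cons_of_mem (count_pos_iff.1 (by omega : 0 < r.count d))
  exact ⟨x, y, z, rfl, hy⟩

theorem exists_splitOn_append_eq_cons {S : List α} (hS : d ∉ S) (t : List α) :
    ∃ r l, (S ++ t).splitOn d = (S ++ r) :: l := by
  by_cases ht : d ∈ t
  · obtain ⟨t₁, t₂, rfl, ht₁⟩ := eq_append_cons_of_mem ht
    refine ⟨t₁, t₂.splitOn d, ?_⟩
    rw [← append_assoc, splitOn_append_cons_self_of_not_mem (by simp [hS, ht₁])]
  · exact ⟨t, [], splitOn_eq_singleton (by simp [hS, ht])⟩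

theorem exists_splitOn_append_eq_concat {P : List α} (hP : d ∉ P) (s : List α) :
    ∃ l r, (s ++ P).splitOn d = l ++ [r ++ P] := by
  by_cases hs : d ∈ s
  · obtain ⟨s₁, s₂, rfl, hs₂⟩ := eq_append_cons_of_mem_last hs
    have hs₂P : d ∉ s₂ ++ P := by simp [hs₂, hP]
    refine ⟨s₁.splitOn d, s₂, ?_⟩
    rw [append_assoc, cons_append, splitOn_append_cons_self, splitOn_eq_singleton hs₂P]
  · exact ⟨[], s, splitOn_eq_singleton (by simp [hs, hP])⟩

theorem exists_mem_splitOn_infix {v w : List α} (hv : d ∉ v) (h : v <:+: w) :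
    ∃ u ∈ w.splitOn d, v <:+: u := by
  obtain ⟨s, t, rfl⟩ := h
  by_cases hs : d ∈ s
  · obtain ⟨s₁, s₂, rfl, hs₂⟩ := eq_append_cons_of_mem_last hs
    obtain ⟨r, l, hrl⟩ := exists_splitOn_append_eq_cons (d := d) (S := s₂ ++ v)
      (by simp [hs₂, hv]) t
    refine ⟨s₂ ++ v ++ r, ?_, ⟨s₂, r, rfl⟩⟩
    rw [append_assoc, append_assoc, cons_append, splitOn_append_cons_self, ← append_assoc, hrl]
    simp
  · obtain ⟨r, l, hrl⟩ := exists_splitOn_append_eq_cons (d := d) (S := s ++ v)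
      (by simp [hs, hv]) t
    exact ⟨s ++ v ++ r, hrl ▸ mem_cons_self, ⟨s, r, rfl⟩⟩

variable {us : List (List α)}

theorem eq_splitOn_append_splitOn_of_intercalate_eq (hd : ∀ u ∈ us, d ∉ u) (hne : us ≠ [])
    {s t : List α} (h : [d].intercalate us = s ++ d :: t) : us = s.splitOn d ++ t.splitOn d := by
  rw [← splitOn_intercalate d hd hne, h, splitOn_append_cons_self]

theorem exists_suffix_prefix_of_append_cons_infix_intercalate (hd : ∀ u ∈ us, d ∉ u)
    (hne : us ≠ []) {P S : List α} (hP : d ∉ P) (hS : d ∉ S)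
    (h : P ++ d :: S <:+: [d].intercalate us) :
    ∃ i, ∃ hi : i + 1 < us.length, P <:+ us[i] ∧ S <+: us[i + 1] := by
  obtain ⟨s, t, hst⟩ := h
  obtain ⟨l, r, hl⟩ := exists_splitOn_append_eq_concat hP s
  obtain ⟨r', l', hr'⟩ := exists_splitOn_append_eq_cons hS t
  have hus : us = l ++ (r ++ P) :: (S ++ r') :: l' := by
    rw [eq_splitOn_append_splitOn_of_intercalate_eq hd hne (s := s ++ P) (t := S ++ t)
      (by rw [← hst]; simp), hl, hr']
    simp
  subst hus
  exact ⟨l.length, by simp, by simp, by simp [getElem_append_right]⟩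

theorem not_append_append_infix_intercalate_of_two_le_count (hnd : us.Nodup)
    (hd : ∀ u ∈ us, d ∉ u) (hne : us ≠ []) {A : List α} (hA : 2 ≤ A.count d) (B : List α) :
    ¬ A ++ B ++ A <:+: [d].intercalate us := by
  rintro ⟨p, q, hw⟩
  obtain ⟨a, g, b, rfl, hg⟩ := exists_eq_append_cons_append_cons_of_two_le_count hA
  have hsplit : ∀ {s t}, [d].intercalate us = s ++ d :: (g ++ d :: t) →
      us = s.splitOn d ++ g :: t.splitOn d := fun h => by
    rw [eq_splitOn_append_splitOn_of_intercalate_eq hd hne h,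
      splitOn_append_cons_self_of_not_mem hg]
  have h₁ := hsplit (s := p ++ a) (t := b ++ B ++ a ++ d :: (g ++ d :: b) ++ q)
    (by rw [← hw]; simp)
  have h₂ := hsplit (s := p ++ a ++ d :: (g ++ d :: b) ++ B ++ a) (t := b ++ q)
    (by rw [← hw]; simp)
  have hprefix := eq_of_append_cons_eq_of_nodup (h₁ ▸ hnd) (h₁.symm.trans h₂)
  have heq := congrArg ([d].intercalate ·) hprefix
  simp only [intercalate_splitOn] at heq
  simpa using congrArg length heq

end List

namespace IsZiminCopy

variable {α : Type*}

theorem exists_eq_append {n : ℕ} {X : List α} (h : IsZiminCopy (n + 1) X) :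
    ∃ A B, IsZiminCopy n A ∧ B ≠ [] ∧ X = A ++ B ++ A := by
  obtain ⟨σ, hσ, rfl⟩ := h
  exact ⟨_, σ (n + 1), ⟨σ, hσ, rfl⟩, hσ _, by simp [Zimin]⟩

open List in
theorem exists_infix_adjacent_of_count_eq_one [DecidableEq α] {d : α} {us : List (List α)}
    (hd : ∀ u ∈ us, d ∉ u) (hne : us ≠ []) {n : ℕ} {A : List α} (hA : IsZiminCopy n A)
    (h1 : A.count d = 1) (hAw : A <:+: [d].intercalate us) :
    ∃ A', IsZiminCopy (n - 1) A' ∧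
      ∃ i, ∃ hi : i + 1 < us.length, A' <:+: us[i] ∧ A' <:+: us[i + 1] := by
  obtain _ | k := n
  · obtain ⟨σ, -, rfl⟩ := hA
    simp [Zimin] at h1
  obtain ⟨A', B', hA', -, rfl⟩ := hA.exists_eq_append
  simp only [count_append] at h1
  obtain ⟨x, y, rfl, hx, hy⟩ := exists_eq_append_cons_of_count_eq_one (d := d) (l := B') (by omega)
  have hdA' : d ∉ A' := count_eq_zero.1 (by omega)
  obtain ⟨i, hi, hP, hS⟩ := exists_suffix_prefix_of_append_cons_infix_intercalate hd hne
    (P := A' ++ x) (S := y ++ A') (by simp [hdA', hx]) (by simp [hy, hdA']) (by simpa using hAw)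
  exact ⟨A', hA', i, hi, (prefix_append _ _).isInfix.trans hP.isInfix,
    (suffix_append _ _).isInfix.trans hS.isInfix⟩

end IsZiminCopy

/-- Core of Lemma 4.1: if `w = u₁ d u₂ d ⋯ d u_M` is formed from `M ≥ 2`
pairwise distinct words `uᵢ`, none containing `d`, each avoiding `Z_n`,
each `uᵢ` having a distinguished letter `c i` (every infix of `uᵢ` avoiding
`c i` avoids `Z_{n-1}`), where the distinguished letters of consecutive
words alternate (`c i ∉ u_{i+1}` and `c (i+1) ∉ uᵢ`), then `w` avoids
`Z_{n+1}`. -/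
theorem concat_avoids {q n : ℕ} (d : Fin q)
    (us : List (List (Fin q))) (hdistinct : us.Nodup)
    (hd : ∀ u ∈ us, d ∉ u)
    (hZn : ∀ u ∈ us, ¬ ContainsZimin n u)
    (c : ℕ → Fin q)
    (hc : ∀ (i : ℕ) (h : i < us.length), ∀ v : List (Fin q),
      v <:+: us[i] → c i ∉ v → ¬ ContainsZimin (n - 1) v)
    (halt₁ : ∀ (i : ℕ) (h : i + 1 < us.length), c i ∉ us[i + 1]) :
    ¬ ContainsZimin (n + 1) (List.intercalate [d] us) := by
  rintro ⟨X, hX, hXw⟩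
  obtain ⟨A, B, hA, hB, rfl⟩ := hX.exists_eq_append
  obtain rfl | hne := eq_or_ne us []
  · simp only [List.intercalate_nil, List.infix_nil, List.append_eq_nil_iff] at hXw
    exact hB hXw.1.2
  have hAw : A <:+: [d].intercalate us :=
    (List.infix_append_left.trans List.infix_append_left).trans hXw
  obtain h0 | h1 | h2 : A.count d = 0 ∨ A.count d = 1 ∨ 2 ≤ A.count d := by omega
  · obtain ⟨u, hu, hAu⟩ := List.exists_mem_splitOn_infix (List.count_eq_zero.1 h0) hAw
    rw [List.splitOn_intercalate d hd hne] at hu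
    exact hZn u hu ⟨A, hA, hAu⟩
  · obtain ⟨A', hA', i, hi, hA'i, hA'i₁⟩ :=
      hA.exists_infix_adjacent_of_count_eq_one hd hne h1 hAw
    exact hc i (by omega) A' hA'i (fun hcA' => halt₁ i hi (hA'i₁.subset hcA'))
      ⟨A', hA', List.infix_rfl⟩
  · exact List.not_append_append_infix_intercalate_of_two_le_count hdistinct hd hne h2 B hXw
end

section
/- If a binary word w does not contain 1^{2n+1} (2n+1 consecutive ones) as an infix and w begins and ends with 0, then the word obtained by concatenating copies of such words separated by blocks 1^{2n+2} does not contain 1^{2n+3} as an infix. -/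
/-!
Since every block `u` begins and ends with `0`, a run of ones in the concatenation can never
straddle the boundary between a block and a separator. So a run of `2n+3` ones would lie inside
a single block, which has no run of `2n+1` ones, or inside a separator, which is too short.
-/

/-- `ones k` is the binary word consisting of `k` ones. -/
def ones (k : ℕ) : List (Fin 2) := List.replicate k 1

namespace List

variable {α : Type*} {a : α} {m : ℕ}

theorem replicate_infix_append_of_getLast?_ne {x y : List α} (hx : x.getLast? ≠ some a)
    (h : replicate m a <:+: x ++ y) : replicate m a <:+: x ∨ replicate m a <:+: y := by
  rcases infix_append_iff_ne_nil.mp h with hx' | hy | ⟨l₁, l₂, hl₁, -, hl, ⟨s, rfl⟩, -⟩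
  · exact .inl hx'
  · exact .inr hy
  · have hrep : l₁ = replicate l₁.length a :=
      (prefix_replicate_iff.mp (hl ▸ prefix_append _ _)).2
    rw [getLast?_append_of_ne_nil _ hl₁, hrep, getLast?_replicate] at hx
    simp [hl₁] at hx

theorem replicate_infix_append_of_head?_ne {x y : List α} (hy : y.head? ≠ some a)
    (h : replicate m a <:+: x ++ y) : replicate m a <:+: x ∨ replicate m a <:+: y := by
  rw [← reverse_infix, reverse_append, reverse_replicate] at h
  rw [← getLast?_reverse] at hy
  simpa only [← reverse_infix (l₂ := x), ← reverse_infix (l₂ := y), reverse_replicate,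
    or_comm] using replicate_infix_append_of_getLast?_ne hy h

theorem head?_intercalate_cons {sep u : List α} (hu : u ≠ []) (us : List (List α)) :
    (sep.intercalate (u :: us)).head? = u.head? := by
  obtain ⟨x, u, rfl⟩ := exists_cons_of_ne_nil hu
  simp

theorem replicate_not_infix_intercalate {b : α} (hab : b ≠ a) {sep : List α}
    (hsep : ¬ replicate m a <:+: sep) {us : List (List α)}
    (hbegin : ∀ u ∈ us, u.head? = some b) (hend : ∀ u ∈ us, u.getLast? = some b)
    (hus : ∀ u ∈ us, ¬ replicate m a <:+: u) :
    ¬ replicate m a <:+: sep.intercalate us := by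
  induction us with
  | nil => exact fun h => hsep (h.trans nil_infix)
  | cons u us ih =>
    simp only [forall_mem_cons] at hbegin hend hus
    rcases us with _ | ⟨v, us⟩
    · simpa using hus.1
    intro h
    rw [intercalate_cons_cons, append_assoc] at h
    have hv : v.head? = some b := (forall_mem_cons.mp hbegin.2).1
    have hrest : (sep.intercalate (v :: us)).head? ≠ some a := by
      rw [head?_intercalate_cons (by rintro rfl; simp at hv), hv]
      simpa using hab
    rcases replicate_infix_append_of_getLast?_ne (by simpa [hend.1] using hab) h with hu | h
    · exact hus.1 hu
    rcases replicate_infix_append_of_head?_ne hrest h with hs | hr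
    · exact hsep hs
    · exact ih hbegin.2 hend.2 hus.2 hr

end List

/-- If binary words `u₁, …, u_b` each begin and end with `0` and contain no
`2n+1` consecutive ones, then their concatenation with separating blocks
`1^{2n+2}` contains no `2n+3` consecutive ones. -/
theorem no_long_ones (n : ℕ) (us : List (List (Fin 2)))
    (hbegin : ∀ u ∈ us, u.head? = some 0)
    (hend : ∀ u ∈ us, u.getLast? = some 0)
    (hones : ∀ u ∈ us, ¬ ones (2 * n + 1) <:+: u) :
    ¬ ones (2 * n + 3) <:+: List.intercalate (ones (2 * n + 2)) us := by
  have hshort : ones (2 * n + 1) <:+: ones (2 * n + 3) :=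
    List.infix_replicate_iff.mpr ⟨by simp [ones], by simp [ones]⟩
  have hsep : ¬ ones (2 * n + 3) <:+: ones (2 * n + 2) := fun h => by
    simpa [ones] using h.length_le
  exact List.replicate_not_infix_intercalate (b := 0) (by decide) hsep hbegin hend
    fun u hu h => hones u hu (hshort.trans h)
end

section
/- Any word w over Fin q with property P — any two occurrences of the same letter are at distance at least q-1 and all length-q infixes of w are pairwise distinct — avoids Z_3. -/
/-!
Put `D = A ++ B ++ A`, so that `Z₃ = D ++ C ++ D`. If `|D| ≥ q`, the two occurrences of `D`
give two distinct positions with the same length-`q` infix. If `|D| < q`, then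
`|A ++ B| ≤ q - 2`, and the first letter of `A` recurs after `|A ++ B|` steps, too soon.
-/

namespace List

variable {α : Type*}

theorem IsPrefix.take_eq_take {D l : List α} (h : D <+: l) {n : ℕ} (hn : n ≤ D.length) :
    l.take n = D.take n := by
  rw [prefix_iff_eq_take.mp h, take_take, Nat.min_eq_left hn]

theorem not_append_append_infix_of_take_drop_ne {w : List α} {q : ℕ}
    (hdist : ∀ i j : ℕ, i ≠ j → i + q ≤ w.length → j + q ≤ w.length →
      (w.drop i).take q ≠ (w.drop j).take q)
    {D C : List α} (hD : D ≠ []) (hq : q ≤ D.length) : ¬ D ++ C ++ D <:+: w := by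
  rintro ⟨u, v, rfl⟩
  have hfirst : D <+: (u ++ (D ++ C ++ D) ++ v).drop u.length := by
    simp only [append_assoc, drop_left]
    exact prefix_append _ _
  have hsecond : D <+: (u ++ (D ++ C ++ D) ++ v).drop (u.length + (D ++ C).length) := by
    rw [← drop_drop]
    simp only [append_assoc, drop_left]
    rw [← append_assoc, drop_left]
    exact prefix_append _ _
  refine hdist u.length (u.length + (D ++ C).length) (by simp [hD]) (by simp; omega)
    (by simp; omega) ?_
  rw [hfirst.take_eq_take hq, hsecond.take_eq_take hq]

theorem not_append_append_infix_of_separated {w : List α} {d : ℕ}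
    (hsep : ∀ (i j : ℕ) (hi : i < w.length) (hj : j < w.length), i < j →
      w.get ⟨i, hi⟩ = w.get ⟨j, hj⟩ → d ≤ j - i)
    {A B : List α} (hA : A ≠ []) (hd : (A ++ B).length < d) : ¬ A ++ B ++ A <:+: w := by
  rintro ⟨u, v, rfl⟩
  have hpos := length_pos_iff.mpr hA
  have hi : u.length < (u ++ (A ++ B ++ A) ++ v).length := by simp; omega
  have hj : u.length + (A ++ B).length < (u ++ (A ++ B ++ A) ++ v).length := by simp; omega
  have hfirst : (u ++ (A ++ B ++ A) ++ v)[u.length] = A[0] := by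
    simp [append_assoc, getElem_append_right, getElem_append_left, hpos]
  have hsecond : (u ++ (A ++ B ++ A) ++ v)[u.length + (A ++ B).length] = A[0] := by
    simp [append_assoc, getElem_append_right, getElem_append_left, hpos]
  have := hsep _ _ hi hj (by simp; omega) (by simp only [get_eq_getElem, hfirst, hsecond])
  omega

end List

theorem propertyP_avoids_Z3_general (q : ℕ) (w : List (Fin q))
    (hsep : ∀ (i j : ℕ) (hi : i < w.length) (hj : j < w.length), i < j →
      w.get ⟨i, hi⟩ = w.get ⟨j, hj⟩ → q - 1 ≤ j - i)
    (hdist : ∀ i j : ℕ, i ≠ j → i + q ≤ w.length → j + q ≤ w.length →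
      (w.drop i).take q ≠ (w.drop j).take q) :
    ¬ ∃ A B C : List (Fin q), A ≠ [] ∧ B ≠ [] ∧ C ≠ [] ∧
      (A ++ B ++ A ++ C ++ A ++ B ++ A) <:+: w := by
  rintro ⟨A, B, C, hA, -, -, hZ3⟩
  have hABA : A ++ B ++ A ++ C ++ (A ++ B ++ A) <:+: w := by
    simpa only [List.append_assoc] using hZ3
  by_cases hq : q ≤ (A ++ B ++ A).length
  · exact List.not_append_append_infix_of_take_drop_ne hdist (by simp [hA]) hq hABA
  · refine List.not_append_append_infix_of_separated hsep hA ?_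
      ((List.prefix_append _ _).isInfix.trans ((List.infix_append_left ..).trans hABA))
    have := List.length_pos_iff.mpr hA
    simp only [List.length_append] at hq ⊢
    omega

/-- Any word over `Fin q` in which equal letters are at distance at least
`q - 1` and all length-`q` infixes are pairwise distinct avoids `Z₃`. -/
theorem propertyP_avoids_Z3 (q : ℕ) (hq : 3 ≤ q) (w : List (Fin q))
    (hsep : ∀ (i j : ℕ) (hi : i < w.length) (hj : j < w.length), i < j →
      w.get ⟨i, hi⟩ = w.get ⟨j, hj⟩ → q - 1 ≤ j - i)
    (hdist : ∀ i j : ℕ, i ≠ j → i + q ≤ w.length → j + q ≤ w.length →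
      (w.drop i).take q ≠ (w.drop j).take q) :
    ¬ ∃ A B C : List (Fin q), A ≠ [] ∧ B ≠ [] ∧ C ≠ [] ∧
      (A ++ B ++ A ++ C ++ A ++ B ++ A) <:+: w :=
  propertyP_avoids_Z3_general q w hsep hdist
end

section
/- A word over Fin q with property P (all pairs of equal letters at distance ≥ q-1 and all length-q infixes distinct) has length at most 2·q! + q - 1. -/
/-- A word over `Fin q` in which equal letters are at distance at least `q - 1`
and all length-`q` infixes are pairwise distinct has length at most
`2·q! + q - 1`. -/
theorem propertyP_length_bound (q : ℕ) (hq : 2 ≤ q) (w : List (Fin q))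
    (hsep : ∀ (i j : ℕ) (hi : i < w.length) (hj : j < w.length), i < j →
      w.get ⟨i, hi⟩ = w.get ⟨j, hj⟩ → q - 1 ≤ j - i)
    (hdist : ∀ i j : ℕ, i ≠ j → i + q ≤ w.length → j + q ≤ w.length →
      (w.drop i).take q ≠ (w.drop j).take q) :
    w.length ≤ 2 * q.factorial + q - 1 := by
  set L := w.length with hL
  by_cases hLq : L < q
  · have : 1 ≤ q.factorial := q.factorial_pos
    omega
  push_neg at hLq
  set N := L - q + 1 with hN
  have hidx : ∀ i : Fin N, ∀ k, k < q → i.1 + k < L := by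
    intro i k hk; have := i.2; omega
  -- key separation consequence
  have key : ∀ (a b : ℕ) (ha : a < L) (hb : b < L), a < b → b - a < q - 1 →
      w.get ⟨a, ha⟩ ≠ w.get ⟨b, hb⟩ := by
    intro a b ha hb hab hlt heq
    have := hsep a b ha hb hab heq; omega
  have key' : ∀ (a b : ℕ) (ha : a < L) (hb : b < L), a ≠ b → (b - a < q - 1 ∧ a - b < q - 1) →
      w.get ⟨a, ha⟩ ≠ w.get ⟨b, hb⟩ := by
    intro a b ha hb hab hlt heq
    rcases lt_or_gt_of_ne hab with h | h
    · exact key a b ha hb h hlt.1 heq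
    · exact key b a hb ha h hlt.2 heq.symm
  -- the embedding of first q-1 letters
  have hinj : ∀ i : Fin N, Function.Injective
      (fun t : Fin (q-1) => w.get ⟨i.1 + t.1, hidx i t.1 (by omega)⟩) := by
    intro i a b hab
    by_contra hne
    have hne' : i.1 + a.1 ≠ i.1 + b.1 := by
      intro h; apply hne; exact Fin.ext (by omega)
    have ha := a.2; have hb := b.2
    exact key' _ _ _ _ hne' ⟨by omega, by omega⟩ hab
  set F : Fin N → (Fin (q-1) ↪ Fin q) × Bool := fun i =>
    (⟨fun t => w.get ⟨i.1 + t.1, hidx i t.1 (by omega)⟩, hinj i⟩,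
      decide (w.get ⟨i.1 + (q-1), hidx i (q-1) (by omega)⟩ = w.get ⟨i.1 + 0, hidx i 0 (by omega)⟩))
    with hF
  have Finj : Function.Injective F := by
    intro i j hij
    by_contra hne
    have hne' : i.1 ≠ j.1 := fun h => hne (Fin.ext h)
    have h1 : (F i).1 = (F j).1 := by rw [hij]
    have h2 : (F i).2 = (F j).2 := by rw [hij]
    have hfun : ∀ t : Fin (q-1),
        w.get ⟨i.1 + t.1, hidx i t.1 (by omega)⟩ = w.get ⟨j.1 + t.1, hidx j t.1 (by omega)⟩ := by
      intro t
      exact congrFun (congrArg (fun e => (e : Fin (q-1) ↪ Fin q).toFun) h1) t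
    -- the last letters agree
    have hlast : w.get ⟨i.1 + (q-1), hidx i (q-1) (by omega)⟩
        = w.get ⟨j.1 + (q-1), hidx j (q-1) (by omega)⟩ := by
      by_cases hb : w.get ⟨i.1 + (q-1), hidx i (q-1) (by omega)⟩ = w.get ⟨i.1 + 0, hidx i 0 (by omega)⟩
      · have hbj : w.get ⟨j.1 + (q-1), hidx j (q-1) (by omega)⟩ = w.get ⟨j.1 + 0, hidx j 0 (by omega)⟩ := by
          have := h2
          simp only [hF, decide_eq_decide] at this
          exact this.mp hb
        rw [hb, hbj]
        exact hfun ⟨0, by omega⟩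
      · have hbj : ¬ w.get ⟨j.1 + (q-1), hidx j (q-1) (by omega)⟩ = w.get ⟨j.1 + 0, hidx j 0 (by omega)⟩ := by
          have := h2
          simp only [hF, decide_eq_decide] at this
          exact fun h => hb (this.mpr h)
        -- both last letters lie outside the common image, which misses exactly one element
        have hnotin : ∀ (k : Fin N) (hbk : ¬ w.get ⟨k.1 + (q-1), hidx k (q-1) (by omega)⟩
              = w.get ⟨k.1 + 0, hidx k 0 (by omega)⟩) (t : Fin (q-1)),
            w.get ⟨k.1 + (q-1), hidx k (q-1) (by omega)⟩ ≠ w.get ⟨k.1 + t.1, hidx k t.1 (by omega)⟩ := by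
          intro k hbk t
          rcases Nat.eq_zero_or_pos t.1 with ht | ht
          · intro h; apply hbk
            rw [h]; congr 1
            exact Fin.ext (show k.1 + t.1 = k.1 + 0 by omega)
          · have ht2 := t.2
            exact key' (k.1+(q-1)) (k.1+t.1) (hidx k (q-1) (by omega))
              (hidx k t.1 (by omega)) (by omega) ⟨by omega, by omega⟩
        set s : Finset (Fin q) :=
          Finset.univ \ Finset.image (fun t : Fin (q-1) => w.get ⟨i.1 + t.1, hidx i t.1 (by omega)⟩) Finset.univ with hs
        have hcard : s.card = 1 := by
          rw [hs, Finset.card_sdiff_of_subset (Finset.subset_univ _),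
            Finset.card_image_of_injective _ (hinj i)]
          simp; omega
        obtain ⟨x, hx⟩ := Finset.card_eq_one.mp hcard
        have hmem : ∀ (k : Fin N) (hk : ∀ t : Fin (q-1),
            w.get ⟨k.1 + (q-1), hidx k (q-1) (by omega)⟩ ≠ w.get ⟨k.1 + t.1, hidx k t.1 (by omega)⟩)
            (hsame : ∀ t : Fin (q-1),
              w.get ⟨k.1 + t.1, hidx k t.1 (by omega)⟩ = w.get ⟨i.1 + t.1, hidx i t.1 (by omega)⟩),
            w.get ⟨k.1 + (q-1), hidx k (q-1) (by omega)⟩ ∈ s := by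
          intro k hk hsame
          rw [hs]
          refine Finset.mem_sdiff.mpr ⟨Finset.mem_univ _, ?_⟩
          intro hmemim
          obtain ⟨t, -, ht⟩ := Finset.mem_image.mp hmemim
          exact hk t (by rw [hsame t]; exact ht.symm)
        have hi' := hmem i (hnotin i hb) (fun t => rfl)
        have hj' := hmem j (hnotin j hbj) (fun t => (hfun t).symm)
        rw [hx, Finset.mem_singleton] at hi' hj'
        rw [hi', hj']
    -- assemble equality of infixes
    have hii := i.2; have hjj := j.2
    apply hdist i.1 j.1 hne' (by omega) (by omega)
    apply List.ext_getElem
    · simp only [List.length_take, List.length_drop]; omega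
    · intro k hk1 hk2
      simp only [List.getElem_take, List.getElem_drop]
      simp only [List.length_take, List.length_drop, lt_min_iff] at hk1
      have hkq : k < q := hk1.1
      rcases Nat.lt_or_ge k (q-1) with hk | hk
      · exact hfun ⟨k, hk⟩
      · have hkk : k = q - 1 := by omega
        subst hkk
        exact hlast
  have hcardN : N ≤ 2 * q.factorial := by
    have := Fintype.card_le_of_injective F Finj
    simp only [Fintype.card_prod, Fintype.card_bool, Fintype.card_embedding_eq,
      Fintype.card_fin, Fintype.card_fin] at this
    have hdesc : q.descFactorial (q - 1) = q.factorial := by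
      have h1 : q.descFactorial ((q-1)+1) = (q - (q-1)) * q.descFactorial (q-1) :=
        Nat.descFactorial_succ q (q-1)
      have h2 : (q-1)+1 = q := by omega
      rw [h2, Nat.descFactorial_self] at h1
      have h3 : q - (q-1) = 1 := by omega
      rw [h3, one_mul] at h1
      exact h1.symm
    rw [hdesc] at this
    omega
  omega
end
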